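/- arXiv:1407.2791 — 9 statements merged into one kernel-verified Lean document; each statement's English description precedes it below -/
import Mathlib

section
/- Let the BS noise powers equal the user noise powers, i.e. δ_n² = σ_k² = σ² > 0 for all n and k. Then: (1) the optimal value (supremum) of the uplink sum-power problem (P_sum^UL) equals the optimal value of the downlink sum-power problem (P_sum); and (2) if (p^UL, a^UL) attains the optimum of (P_sum^UL), then a^UL is also an optimal BS association for (P_sum), i.e. the supremum of min_k SINR_k(p, a^UL) over all p ≥ 0 with Σ_k p_k ≤ Σ_n p̄_n equals the optimal value of (P_sum). -/
open Finset

/-- Downlink SINR of user `k` under power vector `p` and BS association `a`. -/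
noncomputable def SINRdl {N K : ℕ} (g : Fin N → Fin K → ℝ) (σsq : Fin K → ℝ)
    (p : Fin K → ℝ) (a : Fin K → Fin N) (k : Fin K) : ℝ :=
  p k * g (a k) k / (σsq k + ∑ j ∈ Finset.univ.erase k, p j * g (a j) k)

/-- Uplink SINR of user `k` under power vector `p` and BS association `a`. -/
noncomputable def SINRul {N K : ℕ} (g : Fin N → Fin K → ℝ) (δsq : Fin N → ℝ)
    (p : Fin K → ℝ) (a : Fin K → Fin N) (k : Fin K) : ℝ :=
  g (a k) k * p k / (δsq (a k) + ∑ j ∈ Finset.univ.erase k, g (a k) j * p j)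

/-- Optimal value of the downlink sum-power problem (P_sum). -/
noncomputable def valDLsum {N K : ℕ} (g : Fin N → Fin K → ℝ) (σsq : Fin K → ℝ)
    (S : ℝ) : ℝ :=
  sSup {γ | ∃ (p : Fin K → ℝ) (a : Fin K → Fin N),
    (∀ k, 0 ≤ p k) ∧ (∑ k, p k ≤ S) ∧ γ = ⨅ k, SINRdl g σsq p a k}

/-- Optimal value of the uplink sum-power problem (P_sum^UL). -/
noncomputable def valULsum {N K : ℕ} (g : Fin N → Fin K → ℝ) (δsq : Fin N → ℝ)
    (S : ℝ) : ℝ :=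
  sSup {γ | ∃ (p : Fin K → ℝ) (a : Fin K → Fin N),
    (∀ k, 0 ≤ p k) ∧ (∑ k, p k ≤ S) ∧ γ = ⨅ k, SINRul g δsq p a k}


open Matrix


lemma zmono {K : ℕ} (Z : Matrix (Fin K) (Fin K) ℝ)
    (x : Fin K → ℝ) (hx : ∀ k, 0 ≤ x k) (hZx : ∀ k, 0 < (Zᵀ *ᵥ x) k)
    (hoff : ∀ k j, k ≠ j → Z k j ≤ 0)
    (z : Fin K → ℝ) (hz : ∀ k, 0 ≤ (Z *ᵥ z) k) : ∀ k, 0 ≤ z k := by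
  by_contra hcon
  push_neg at hcon
  obtain ⟨k0, hk0⟩ := hcon
  set S := Finset.univ.filter (fun k => z k < 0) with hS
  have hnonneg : 0 ≤ ∑ k ∈ S, x k * (Z *ᵥ z) k :=
    Finset.sum_nonneg fun k _ => mul_nonneg (hx k) (hz k)
  have hre : ∑ k ∈ S, x k * (Z *ᵥ z) k
      = ∑ j, (∑ k ∈ S, x k * Z k j) * z j := by
    simp only [Matrix.mulVec, dotProduct, Finset.mul_sum, Finset.sum_mul, mul_assoc]
    exact Finset.sum_comm
  have hSsum : ∀ j, z j < 0 → 0 < ∑ k ∈ S, x k * Z k j := by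
    intro j hj
    have h1 : (Zᵀ *ᵥ x) j = ∑ k, x k * Z k j := by
      simp only [Matrix.mulVec, dotProduct, Matrix.transpose_apply]
      exact Finset.sum_congr rfl fun k _ => mul_comm _ _
    have h2 : ∑ k, x k * Z k j
        = ∑ k ∈ S, x k * Z k j + ∑ k ∈ Finset.univ.filter (fun k => ¬ z k < 0), x k * Z k j := by
      rw [Finset.sum_filter_add_sum_filter_not]
    have h3 : ∑ k ∈ Finset.univ.filter (fun k => ¬ z k < 0), x k * Z k j ≤ 0 := by
      apply Finset.sum_nonpos
      intro k hk
      rw [Finset.mem_filter] at hk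
      have hkj : k ≠ j := by rintro rfl; exact hk.2 hj
      exact mul_nonpos_of_nonneg_of_nonpos (hx k) (hoff k j hkj)
    have := hZx j
    rw [h1, h2] at this
    linarith
  have hneg : ∑ j, (∑ k ∈ S, x k * Z k j) * z j < 0 := by
    have hcalc : ∑ j, (∑ k ∈ S, x k * Z k j) * z j < ∑ _j : Fin K, (0:ℝ) := by
      apply Finset.sum_lt_sum
      · intro j _
        by_cases hj : z j < 0
        · exact le_of_lt (mul_neg_of_pos_of_neg (hSsum j hj) hj)
        · push_neg at hj
          apply mul_nonpos_of_nonpos_of_nonneg _ hj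
          apply Finset.sum_nonpos
          intro k hk
          rw [hS, Finset.mem_filter] at hk
          have hkj : k ≠ j := by rintro rfl; exact absurd hk.2 (not_lt.mpr hj)
          exact mul_nonpos_of_nonneg_of_nonpos (hx k) (hoff k j hkj)
      · exact ⟨k0, Finset.mem_univ _, mul_neg_of_pos_of_neg (hSsum k0 hk0) hk0⟩
    simpa using hcalc
  rw [hre] at hnonneg
  linarith

lemma zsolve {K : ℕ} (Z : Matrix (Fin K) (Fin K) ℝ)
    (hoff : ∀ k j, k ≠ j → Z k j ≤ 0)
    (x : Fin K → ℝ) (hx : ∀ k, 0 ≤ x k) (c : ℝ) (hc : 0 < c)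
    (hZx : ∀ k, c ≤ (Zᵀ *ᵥ x) k) :
    ∃ q : Fin K → ℝ, (∀ k, 0 ≤ q k) ∧ (∑ k, q k ≤ ∑ k, x k) ∧ ∀ k, (Z *ᵥ q) k = c := by
  have inj_of_mono : ∀ (W : Matrix (Fin K) (Fin K) ℝ),
      (∀ z, (∀ k, 0 ≤ (W *ᵥ z) k) → ∀ k, 0 ≤ z k) → Function.Injective W.mulVecLin := by
    intro W hW u v huv
    simp only [Matrix.mulVecLin_apply] at huv
    have h1 : ∀ k, (W *ᵥ (u - v)) k = 0 := by
      intro k; rw [Matrix.mulVec_sub, huv]; simp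
    have h2 : ∀ k, (W *ᵥ (v - u)) k = 0 := by
      intro k; rw [Matrix.mulVec_sub, huv]; simp
    have hA := hW (u - v) (fun k => (h1 k).ge)
    have hB := hW (v - u) (fun k => (h2 k).ge)
    funext k
    have := hA k; have := hB k
    simp only [Pi.sub_apply] at *
    linarith
  have hZx' : ∀ k, 0 < (Zᵀ *ᵥ x) k := fun k => lt_of_lt_of_le hc (hZx k)
  have monoZ := zmono Z x hx hZx' hoff
  have surjZ : Function.Surjective Z.mulVecLin :=
    LinearMap.injective_iff_surjective.mp (inj_of_mono Z monoZ)
  obtain ⟨q, hq⟩ := surjZ (fun _ => c)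
  have hZq : ∀ k, (Z *ᵥ q) k = c := by
    intro k; rw [← Matrix.mulVecLin_apply]; exact congrFun hq k
  have hq0 : ∀ k, 0 ≤ q k := monoZ q (fun k => by rw [hZq k]; exact hc.le)
  have hoffT : ∀ k j, k ≠ j → Zᵀ k j ≤ 0 := fun k j h => hoff j k (Ne.symm h)
  have hZTq : ∀ k, 0 < ((Zᵀ)ᵀ *ᵥ q) k := by
    intro k; rw [Matrix.transpose_transpose, hZq k]; exact hc
  have monoZT := zmono Zᵀ q hq0 hZTq hoffT
  have surjZT : Function.Surjective (Zᵀ).mulVecLin :=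
    LinearMap.injective_iff_surjective.mp (inj_of_mono Zᵀ monoZT)
  obtain ⟨ps, hps⟩ := surjZT (fun _ => c)
  have hZps : ∀ k, (Zᵀ *ᵥ ps) k = c := by
    intro k; rw [← Matrix.mulVecLin_apply]; exact congrFun hps k
  have hple : ∀ k, ps k ≤ x k := by
    have := monoZT (x - ps) (fun k => by
      rw [Matrix.mulVec_sub]
      simp only [Pi.sub_apply]
      rw [hZps k]
      linarith [hZx k])
    intro k
    have := this k
    simp only [Pi.sub_apply] at this
    linarith
  have hsum_eq : ∑ k, q k = ∑ k, ps k := by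
    have h1 : ps ⬝ᵥ (Z *ᵥ q) = c * ∑ k, ps k := by
      simp only [dotProduct, hZq, Finset.mul_sum]
      exact Finset.sum_congr rfl fun k _ => mul_comm _ _
    have h2 : ps ⬝ᵥ (Z *ᵥ q) = (Zᵀ *ᵥ ps) ⬝ᵥ q := by
      rw [Matrix.dotProduct_mulVec, ← Matrix.mulVec_transpose]
    have h3 : (Zᵀ *ᵥ ps) ⬝ᵥ q = c * ∑ k, q k := by
      simp only [dotProduct, Finset.mul_sum]
      exact Finset.sum_congr rfl fun k _ => by rw [hZps k]
    have : c * ∑ k, q k = c * ∑ k, ps k := by rw [← h3, ← h2, h1]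
    exact mul_left_cancel₀ (ne_of_gt hc) this
  exact ⟨q, hq0, by rw [hsum_eq]; exact Finset.sum_le_sum fun k _ => hple k, hZq⟩

noncomputable def Zm {N K : ℕ} (g : Fin N → Fin K → ℝ) (a : Fin K → Fin N) (γ : ℝ) :
    Matrix (Fin K) (Fin K) ℝ :=
  Matrix.of fun k j => if k = j then g (a k) k else -(γ * g (a k) j)

lemma Zm_mulVec {N K : ℕ} (g : Fin N → Fin K → ℝ) (a : Fin K → Fin N) (γ : ℝ)
    (q : Fin K → ℝ) (k : Fin K) :
    (Zm g a γ *ᵥ q) k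
      = g (a k) k * q k - γ * ∑ j ∈ Finset.univ.erase k, g (a k) j * q j := by
  simp only [Matrix.mulVec, dotProduct, Zm, Matrix.of_apply]
  rw [← Finset.sum_erase_add Finset.univ _ (Finset.mem_univ k)]
  rw [if_pos rfl]
  have h : ∀ j ∈ Finset.univ.erase k,
      (if k = j then g (a k) k else -(γ * g (a k) j)) * q j
        = -(γ * (g (a k) j * q j)) := by
    intro j hj
    rw [if_neg (Finset.ne_of_mem_erase hj).symm]
    ring
  rw [Finset.sum_congr rfl h, Finset.sum_neg_distrib, ← Finset.mul_sum]
  ring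

lemma Zm_tr_mulVec {N K : ℕ} (g : Fin N → Fin K → ℝ) (a : Fin K → Fin N) (γ : ℝ)
    (q : Fin K → ℝ) (k : Fin K) :
    ((Zm g a γ)ᵀ *ᵥ q) k
      = g (a k) k * q k - γ * ∑ j ∈ Finset.univ.erase k, g (a j) k * q j := by
  simp only [Matrix.mulVec, dotProduct, Zm, Matrix.transpose_apply, Matrix.of_apply]
  rw [← Finset.sum_erase_add Finset.univ _ (Finset.mem_univ k)]
  rw [if_pos rfl]
  have h : ∀ j ∈ Finset.univ.erase k,
      (if j = k then g (a j) j else -(γ * g (a j) k)) * q j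
        = -(γ * (g (a j) k * q j)) := by
    intro j hj
    rw [if_neg (Finset.ne_of_mem_erase hj)]
    ring
  rw [Finset.sum_congr rfl h, Finset.sum_neg_distrib, ← Finset.mul_sum]
  ring

section Transfer
variable {N K : ℕ} (g : Fin N → Fin K → ℝ) (σsq : Fin K → ℝ) (δsq : Fin N → ℝ) (σ2 : ℝ)

lemma zsolve' : True := trivial

lemma transfer_dl_ul (hg : ∀ n k, 0 < g n k) (hσ2 : 0 < σ2)
    (hσ : ∀ k, σsq k = σ2) (hδ : ∀ n, δsq n = σ2)
    (a : Fin K → Fin N) (γ : ℝ) (hγ : 0 < γ) (p : Fin K → ℝ) (hp : ∀ k, 0 ≤ p k)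
    (hfeas : ∀ k, γ ≤ SINRdl g σsq p a k) :
    ∃ q : Fin K → ℝ, (∀ k, 0 ≤ q k) ∧ (∑ k, q k ≤ ∑ k, p k) ∧
      ∀ k, SINRul g δsq q a k = γ := by
  have hoff : ∀ k j, k ≠ j → Zm g a γ k j ≤ 0 := by
    intro k j hkj
    simp only [Zm, Matrix.of_apply, if_neg hkj]
    exact neg_nonpos.mpr (mul_nonneg hγ.le (hg _ _).le)
  have hZx : ∀ k, γ * σ2 ≤ ((Zm g a γ)ᵀ *ᵥ p) k := by
    intro k
    have hT : 0 ≤ ∑ j ∈ Finset.univ.erase k, p j * g (a j) k :=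
      Finset.sum_nonneg fun j _ => mul_nonneg (hp j) (hg _ _).le
    have hden : 0 < σsq k + ∑ j ∈ Finset.univ.erase k, p j * g (a j) k := by
      rw [hσ k]; linarith
    have h1 : γ * (σsq k + ∑ j ∈ Finset.univ.erase k, p j * g (a j) k)
        ≤ p k * g (a k) k := (le_div_iff₀ hden).mp (hfeas k)
    rw [mul_add, hσ k] at h1
    rw [Zm_tr_mulVec]
    have hsc : ∑ j ∈ Finset.univ.erase k, g (a j) k * p j
        = ∑ j ∈ Finset.univ.erase k, p j * g (a j) k :=
      Finset.sum_congr rfl fun j _ => mul_comm _ _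
    rw [hsc]
    have hmc : g (a k) k * p k = p k * g (a k) k := mul_comm _ _
    linarith
  obtain ⟨q, hq0, hqsum, hZq⟩ := zsolve (Zm g a γ) hoff p hp (γ * σ2) (mul_pos hγ hσ2) hZx
  refine ⟨q, hq0, hqsum, fun k => ?_⟩
  have h1 := hZq k
  rw [Zm_mulVec] at h1
  have hT : 0 ≤ ∑ j ∈ Finset.univ.erase k, g (a k) j * q j :=
    Finset.sum_nonneg fun j _ => mul_nonneg (hg _ _).le (hq0 j)
  have hden : 0 < δsq (a k) + ∑ j ∈ Finset.univ.erase k, g (a k) j * q j := by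
    rw [hδ]; linarith
  rw [SINRul, div_eq_iff (ne_of_gt hden), hδ]
  rw [mul_add]
  linarith

lemma transfer_ul_dl (hg : ∀ n k, 0 < g n k) (hσ2 : 0 < σ2)
    (hσ : ∀ k, σsq k = σ2) (hδ : ∀ n, δsq n = σ2)
    (a : Fin K → Fin N) (γ : ℝ) (hγ : 0 < γ) (p : Fin K → ℝ) (hp : ∀ k, 0 ≤ p k)
    (hfeas : ∀ k, γ ≤ SINRul g δsq p a k) :
    ∃ q : Fin K → ℝ, (∀ k, 0 ≤ q k) ∧ (∑ k, q k ≤ ∑ k, p k) ∧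
      ∀ k, SINRdl g σsq q a k = γ := by
  have hoff : ∀ k j, k ≠ j → (Zm g a γ)ᵀ k j ≤ 0 := by
    intro k j hkj
    simp only [Matrix.transpose_apply, Zm, Matrix.of_apply, if_neg (Ne.symm hkj)]
    exact neg_nonpos.mpr (mul_nonneg hγ.le (hg _ _).le)
  have hZx : ∀ k, γ * σ2 ≤ (((Zm g a γ)ᵀ)ᵀ *ᵥ p) k := by
    intro k
    rw [Matrix.transpose_transpose, Zm_mulVec]
    have hT : 0 ≤ ∑ j ∈ Finset.univ.erase k, g (a k) j * p j :=
      Finset.sum_nonneg fun j _ => mul_nonneg (hg _ _).le (hp j)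
    have hden : 0 < δsq (a k) + ∑ j ∈ Finset.univ.erase k, g (a k) j * p j := by
      rw [hδ]; linarith
    have h1 : γ * (δsq (a k) + ∑ j ∈ Finset.univ.erase k, g (a k) j * p j)
        ≤ g (a k) k * p k := (le_div_iff₀ hden).mp (hfeas k)
    rw [mul_add, hδ] at h1
    linarith
  obtain ⟨q, hq0, hqsum, hZq⟩ :=
    zsolve ((Zm g a γ)ᵀ) hoff p hp (γ * σ2) (mul_pos hγ hσ2) hZx
  refine ⟨q, hq0, hqsum, fun k => ?_⟩
  have h1 := hZq k
  rw [Zm_tr_mulVec] at h1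
  have hT : 0 ≤ ∑ j ∈ Finset.univ.erase k, q j * g (a j) k :=
    Finset.sum_nonneg fun j _ => mul_nonneg (hq0 j) (hg _ _).le
  have hden : 0 < σsq k + ∑ j ∈ Finset.univ.erase k, q j * g (a j) k := by
    rw [hσ]; linarith
  rw [SINRdl, div_eq_iff (ne_of_gt hden), hσ]
  rw [mul_add]
  have hsc : ∑ j ∈ Finset.univ.erase k, g (a j) k * q j
      = ∑ j ∈ Finset.univ.erase k, q j * g (a j) k :=
    Finset.sum_congr rfl fun j _ => mul_comm _ _
  rw [hsc] at h1
  have hmc : q k * g (a k) k = g (a k) k * q k := mul_comm _ _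
  linarith

end Transfer

/-- Uplink-downlink duality for the sum-power constrained max-min problem:
with equal noise powers, (1) the optimal values of the uplink and downlink
problems coincide, and (2) an association that is optimal for the uplink
problem is also optimal for the downlink problem. -/
theorem uplink_downlink_duality (N K : ℕ) (hN : 0 < N) (hK : 0 < K)
    (g : Fin N → Fin K → ℝ) (hg : ∀ n k, 0 < g n k)
    (σsq : Fin K → ℝ) (δsq : Fin N → ℝ) (σ2 : ℝ) (hσ2 : 0 < σ2)
    (hσ : ∀ k, σsq k = σ2) (hδ : ∀ n, δsq n = σ2)
    (pbar : Fin N → ℝ) (hpbar : ∀ n, 0 < pbar n) :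
    valULsum g δsq (∑ n, pbar n) = valDLsum g σsq (∑ n, pbar n) ∧
    ∀ (pUL : Fin K → ℝ) (aUL : Fin K → Fin N),
      ((∀ k, 0 ≤ pUL k) ∧ (∑ k, pUL k ≤ ∑ n, pbar n) ∧
        (∀ (p : Fin K → ℝ) (a : Fin K → Fin N),
          (∀ k, 0 ≤ p k) → (∑ k, p k ≤ ∑ n, pbar n) →
          (⨅ k, SINRul g δsq p a k) ≤ ⨅ k, SINRul g δsq pUL aUL k) ∧
        (⨅ k, SINRul g δsq pUL aUL k) = valULsum g δsq (∑ n, pbar n)) →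
      sSup {γ | ∃ p : Fin K → ℝ,
          (∀ k, 0 ≤ p k) ∧ (∑ k, p k ≤ ∑ n, pbar n) ∧
          γ = ⨅ k, SINRdl g σsq p aUL k}
        = valDLsum g σsq (∑ n, pbar n) := by
  have hKn : Nonempty (Fin K) := ⟨⟨0, hK⟩⟩
  have hNn : Nonempty (Fin N) := ⟨⟨0, hN⟩⟩
  set S : ℝ := ∑ n, pbar n with hSdef
  have hS : 0 < S := Finset.sum_pos (fun n _ => hpbar n) Finset.univ_nonempty
  set G : ℝ := ∑ n, ∑ k, g n k with hGdef
  have hG : ∀ n k, g n k ≤ G := by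
    intro n k
    calc g n k ≤ ∑ k', g n k' :=
          Finset.single_le_sum (fun j _ => (hg n j).le) (Finset.mem_univ k)
      _ ≤ G := Finset.single_le_sum
          (fun m (_ : m ∈ Finset.univ) => Finset.sum_nonneg fun j _ => (hg m j).le)
          (Finset.mem_univ n)
  have hG0 : 0 ≤ G :=
    Finset.sum_nonneg fun m _ => Finset.sum_nonneg fun j _ => (hg m j).le
  -- zero-value lemmas
  have hdl0 : ∀ a : Fin K → Fin N, (⨅ k, SINRdl g σsq (fun _ => 0) a k) = 0 := by
    intro a
    have h : ∀ k, SINRdl g σsq (fun _ => (0:ℝ)) a k = 0 := by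
      intro k; simp [SINRdl]
    rw [iInf_congr h]; exact ciInf_const
  have hul0 : ∀ a : Fin K → Fin N, (⨅ k, SINRul g δsq (fun _ => 0) a k) = 0 := by
    intro a
    have h : ∀ k, SINRul g δsq (fun _ => (0:ℝ)) a k = 0 := by
      intro k; simp [SINRul]
    rw [iInf_congr h]; exact ciInf_const
  -- bound lemmas
  have hdlB : ∀ (p : Fin K → ℝ) (a : Fin K → Fin N), (∀ k, 0 ≤ p k) → (∑ k, p k ≤ S) →
      (⨅ k, SINRdl g σsq p a k) ≤ S * G / σ2 := by
    intro p a hp hsum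
    obtain ⟨k0⟩ := hKn
    refine le_trans (ciInf_le (Finite.bddBelow_range _) k0) ?_
    rw [SINRdl]
    have hpk : p k0 ≤ S := le_trans (Finset.single_le_sum (fun j _ => hp j)
      (Finset.mem_univ k0)) hsum
    have hnum : p k0 * g (a k0) k0 ≤ S * G :=
      mul_le_mul hpk (hG _ _) (hg _ _).le hS.le
    have hT : 0 ≤ ∑ j ∈ Finset.univ.erase k0, p j * g (a j) k0 :=
      Finset.sum_nonneg fun j _ => mul_nonneg (hp j) (hg _ _).le
    have hden : σ2 ≤ σsq k0 + ∑ j ∈ Finset.univ.erase k0, p j * g (a j) k0 := by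
      rw [hσ]; linarith
    exact div_le_div₀ (mul_nonneg hS.le hG0) hnum hσ2 hden
  have hulB : ∀ (p : Fin K → ℝ) (a : Fin K → Fin N), (∀ k, 0 ≤ p k) → (∑ k, p k ≤ S) →
      (⨅ k, SINRul g δsq p a k) ≤ S * G / σ2 := by
    intro p a hp hsum
    obtain ⟨k0⟩ := hKn
    refine le_trans (ciInf_le (Finite.bddBelow_range _) k0) ?_
    rw [SINRul]
    have hpk : p k0 ≤ S := le_trans (Finset.single_le_sum (fun j _ => hp j)
      (Finset.mem_univ k0)) hsum
    have hnum : g (a k0) k0 * p k0 ≤ S * G := by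
      rw [mul_comm]; exact mul_le_mul hpk (hG _ _) (hg _ _).le hS.le
    have hT : 0 ≤ ∑ j ∈ Finset.univ.erase k0, g (a k0) j * p j :=
      Finset.sum_nonneg fun j _ => mul_nonneg (hg _ _).le (hp j)
    have hden : σ2 ≤ δsq (a k0) + ∑ j ∈ Finset.univ.erase k0, g (a k0) j * p j := by
      rw [hδ]; linarith
    exact div_le_div₀ (mul_nonneg hS.le hG0) hnum hσ2 hden
  -- the sets
  set Aset : Set ℝ := {γ | ∃ (p : Fin K → ℝ) (a : Fin K → Fin N),
    (∀ k, 0 ≤ p k) ∧ (∑ k, p k ≤ S) ∧ γ = ⨅ k, SINRul g δsq p a k} with hAdef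
  set Bset : Set ℝ := {γ | ∃ (p : Fin K → ℝ) (a : Fin K → Fin N),
    (∀ k, 0 ≤ p k) ∧ (∑ k, p k ≤ S) ∧ γ = ⨅ k, SINRdl g σsq p a k} with hBdef
  have hvalU : valULsum g δsq S = sSup Aset := rfl
  have hvalD : valDLsum g σsq S = sSup Bset := rfl
  have hzA : (0:ℝ) ∈ Aset :=
    ⟨fun _ => 0, fun _ => Classical.arbitrary _, fun _ => le_refl 0,
      by simpa using hS.le, (hul0 _).symm⟩
  have hzB : (0:ℝ) ∈ Bset :=
    ⟨fun _ => 0, fun _ => Classical.arbitrary _, fun _ => le_refl 0,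
      by simpa using hS.le, (hdl0 _).symm⟩
  have hAbdd : BddAbove Aset := by
    refine ⟨S * G / σ2, ?_⟩
    rintro γ ⟨p, a, hp, hsum, rfl⟩
    exact hulB p a hp hsum
  have hBbdd : BddAbove Bset := by
    refine ⟨S * G / σ2, ?_⟩
    rintro γ ⟨p, a, hp, hsum, rfl⟩
    exact hdlB p a hp hsum
  have part1 : valULsum g δsq S = valDLsum g σsq S := by
    rw [hvalU, hvalD]
    apply le_antisymm
    · apply csSup_le ⟨0, hzA⟩
      rintro γ ⟨p, a, hp, hsum, rfl⟩
      by_cases hpos : 0 < ⨅ k, SINRul g δsq p a k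
      · obtain ⟨q, hq0, hqs, hq⟩ := transfer_ul_dl g σsq δsq σ2 hg hσ2 hσ hδ a _ hpos p hp
          (fun k => ciInf_le (Finite.bddBelow_range _) k)
        exact le_csSup hBbdd
          ⟨q, a, hq0, le_trans hqs hsum, by rw [iInf_congr hq, ciInf_const]⟩
      · push_neg at hpos
        exact le_trans hpos (le_csSup hBbdd hzB)
    · apply csSup_le ⟨0, hzB⟩
      rintro γ ⟨p, a, hp, hsum, rfl⟩
      by_cases hpos : 0 < ⨅ k, SINRdl g σsq p a k
      · obtain ⟨q, hq0, hqs, hq⟩ := transfer_dl_ul g σsq δsq σ2 hg hσ2 hσ hδ a _ hpos p hp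
          (fun k => ciInf_le (Finite.bddBelow_range _) k)
        exact le_csSup hAbdd
          ⟨q, a, hq0, le_trans hqs hsum, by rw [iInf_congr hq, ciInf_const]⟩
      · push_neg at hpos
        exact le_trans hpos (le_csSup hAbdd hzA)
  refine ⟨part1, ?_⟩
  rintro pUL aUL ⟨hp0, hpsum, -, hval⟩
  set Cset : Set ℝ := {γ | ∃ p : Fin K → ℝ,
    (∀ k, 0 ≤ p k) ∧ (∑ k, p k ≤ S) ∧ γ = ⨅ k, SINRdl g σsq p aUL k} with hCdef
  have hzC : (0:ℝ) ∈ Cset :=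
    ⟨fun _ => 0, fun _ => le_refl 0, by simpa using hS.le, (hdl0 aUL).symm⟩
  have hCbdd : BddAbove Cset := by
    refine ⟨S * G / σ2, ?_⟩
    rintro γ ⟨p, hp, hsum, rfl⟩
    exact hdlB p aUL hp hsum
  apply le_antisymm
  · apply csSup_le ⟨0, hzC⟩
    rintro γ ⟨p, hp, hsum, rfl⟩
    rw [hvalD]
    exact le_csSup hBbdd ⟨p, aUL, hp, hsum, rfl⟩
  · rw [← part1, ← hval]
    by_cases hpos : 0 < ⨅ k, SINRul g δsq pUL aUL k
    · obtain ⟨q, hq0, hqs, hq⟩ := transfer_ul_dl g σsq δsq σ2 hg hσ2 hσ hδ aUL _ hpos pUL hp0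
        (fun k => ciInf_le (Finite.bddBelow_range _) k)
      exact le_csSup hCbdd
        ⟨q, hq0, le_trans hqs hpsum, by rw [iInf_congr hq, ciInf_const]⟩
    · push_neg at hpos
      exact le_trans hpos (le_csSup hCbdd hzC)
end

section
/- Suppose g_{n,k} > 0 and δ_n² > 0 for all n, k, and let p̄_sum = Σ_{n=1}^N p̄_n. If (p*, a*) attains the optimum of the uplink sum-power problem (P_sum^UL), then p* satisfies the fixed-point equation p*_k = p̄_sum · T_k(p*) / (Σ_{j=1}^K T_j(p*)) for every user k. -/
open Finset

/-- Minimum power needed by user `k` to achieve SINR 1 when associated with BS `n`. -/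
noncomputable def Tkn {N K : ℕ} (g : Fin N → Fin K → ℝ) (δsq : Fin N → ℝ)
    (n : Fin N) (k : Fin K) (p : Fin K → ℝ) : ℝ :=
  (δsq n + ∑ j ∈ Finset.univ.erase k, g n j * p j) / g n k

/-- Minimum power needed by user `k` to achieve SINR 1, over all BS choices. -/
noncomputable def Tk {N K : ℕ} (g : Fin N → Fin K → ℝ) (δsq : Fin N → ℝ)
    (k : Fin K) (p : Fin K → ℝ) : ℝ :=
  ⨅ n, Tkn g δsq n k p

lemma fin_inf_attained {m : ℕ} (hm : 0 < m) (f : Fin m → ℝ) :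
    ∃ i, (⨅ j, f j) = f i ∧ ∀ j, f i ≤ f j := by
  haveI : Nonempty (Fin m) := ⟨⟨0, hm⟩⟩
  obtain ⟨i, hi⟩ := Finite.exists_min f
  exact ⟨i, le_antisymm (ciInf_le (Finite.bddBelow_range f) i) (le_ciInf hi), hi⟩

section helpers
variable {N K : ℕ} {g : Fin N → Fin K → ℝ} {δsq : Fin N → ℝ}

lemma Tkn_pos (hg : ∀ n k, 0 < g n k) (hδ : ∀ n, 0 < δsq n) (n : Fin N) (k : Fin K)
    {p : Fin K → ℝ} (hp : ∀ j, 0 ≤ p j) : 0 < Tkn g δsq n k p := by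
  have h : 0 ≤ ∑ j ∈ Finset.univ.erase k, g n j * p j :=
    Finset.sum_nonneg fun j _ => mul_nonneg (hg n j).le (hp j)
  exact div_pos (by linarith [hδ n]) (hg n k)

lemma Tk_attained (hN : 0 < N) (k : Fin K) (p : Fin K → ℝ) :
    ∃ n, Tk g δsq k p = Tkn g δsq n k p ∧ ∀ m, Tkn g δsq n k p ≤ Tkn g δsq m k p :=
  fin_inf_attained hN _

lemma Tk_pos (hN : 0 < N) (hg : ∀ n k, 0 < g n k) (hδ : ∀ n, 0 < δsq n) (k : Fin K)
    {p : Fin K → ℝ} (hp : ∀ j, 0 ≤ p j) : 0 < Tk g δsq k p := by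
  obtain ⟨n, hn, -⟩ := Tk_attained (g := g) (δsq := δsq) hN k p
  rw [hn]; exact Tkn_pos hg hδ n k hp

lemma Tk_le_Tkn (n : Fin N) (k : Fin K) (p : Fin K → ℝ) :
    Tk g δsq k p ≤ Tkn g δsq n k p :=
  ciInf_le (Finite.bddBelow_range _) n

lemma Tkn_mono (hg : ∀ n k, 0 < g n k) (n : Fin N) (k : Fin K) {p q : Fin K → ℝ}
    (h : ∀ j, j ≠ k → q j ≤ p j) : Tkn g δsq n k q ≤ Tkn g δsq n k p := by
  unfold Tkn
  refine (div_le_div_iff_of_pos_right (hg n k)).mpr (add_le_add le_rfl (Finset.sum_le_sum ?_))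
  exact fun j hj => mul_le_mul_of_nonneg_left (h j (Finset.ne_of_mem_erase hj)) (hg n j).le

lemma Tkn_strict (hg : ∀ n k, 0 < g n k) (n : Fin N) (k : Fin K) {p q : Fin K → ℝ}
    (h : ∀ j, j ≠ k → q j ≤ p j) (j0 : Fin K) (hj0 : j0 ≠ k) (hlt : q j0 < p j0) :
    Tkn g δsq n k q < Tkn g δsq n k p := by
  unfold Tkn
  have hsum : ∑ j ∈ Finset.univ.erase k, g n j * q j < ∑ j ∈ Finset.univ.erase k, g n j * p j := by
    refine Finset.sum_lt_sum (fun j hj => mul_le_mul_of_nonneg_left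
      (h j (Finset.ne_of_mem_erase hj)) (hg n j).le) ⟨j0, Finset.mem_erase.mpr ⟨hj0, Finset.mem_univ _⟩,
      mul_lt_mul_of_pos_left hlt (hg n j0)⟩
  exact (div_lt_div_iff_of_pos_right (hg n k)).mpr (by linarith)

lemma Tk_mono (hN : 0 < N) (hg : ∀ n k, 0 < g n k) (k : Fin K) {p q : Fin K → ℝ}
    (h : ∀ j, j ≠ k → q j ≤ p j) : Tk g δsq k q ≤ Tk g δsq k p := by
  obtain ⟨n, hn, -⟩ := Tk_attained (g := g) (δsq := δsq) hN k p
  rw [hn]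
  exact (Tk_le_Tkn n k q).trans (Tkn_mono hg n k h)

lemma Tk_strict (hN : 0 < N) (hg : ∀ n k, 0 < g n k) (k : Fin K) {p q : Fin K → ℝ}
    (h : ∀ j, j ≠ k → q j ≤ p j) (j0 : Fin K) (hj0 : j0 ≠ k) (hlt : q j0 < p j0) :
    Tk g δsq k q < Tk g δsq k p := by
  obtain ⟨n, hn, -⟩ := Tk_attained (g := g) (δsq := δsq) hN k p
  rw [hn]
  exact (Tk_le_Tkn n k q).trans_lt (Tkn_strict hg n k h j0 hj0 hlt)

lemma SINRul_eq (p : Fin K → ℝ) (a : Fin K → Fin N) (k : Fin K) :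
    SINRul g δsq p a k = p k / Tkn g δsq (a k) k p := by
  unfold SINRul Tkn
  rw [div_div_eq_mul_div]; ring

end helpers

/-- Any optimal power vector of the uplink sum-power problem satisfies the
fixed-point equation `p*_k = p̄_sum · T_k(p*) / (∑_j T_j(p*))`. -/
theorem optimal_power_is_fixed_point (N K : ℕ) (hN : 0 < N) (hK : 0 < K)
    (g : Fin N → Fin K → ℝ) (hg : ∀ n k, 0 < g n k)
    (δsq : Fin N → ℝ) (hδ : ∀ n, 0 < δsq n)
    (pbar : Fin N → ℝ) (hpbar : ∀ n, 0 < pbar n)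
    (pstar : Fin K → ℝ) (astar : Fin K → Fin N)
    (hfeas : (∀ k, 0 ≤ pstar k) ∧ ∑ k, pstar k ≤ ∑ n, pbar n)
    (hopt : ∀ (p : Fin K → ℝ) (a : Fin K → Fin N),
      (∀ k, 0 ≤ p k) → (∑ k, p k ≤ ∑ n, pbar n) →
      (⨅ k, SINRul g δsq p a k) ≤ ⨅ k, SINRul g δsq pstar astar k) :
    ∀ k, pstar k = (∑ n, pbar n) * Tk g δsq k pstar / ∑ j, Tk g δsq j pstar := by
  obtain ⟨hp0, hpsum⟩ := hfeas
  haveI : Nonempty (Fin K) := ⟨⟨0, hK⟩⟩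
  haveI : Nonempty (Fin N) := ⟨⟨0, hN⟩⟩
  set Pb := ∑ n, pbar n with hPbdef
  have hPbpos : 0 < Pb := Finset.sum_pos (fun n _ => hpbar n) Finset.univ_nonempty
  set γ := ⨅ k, SINRul g δsq pstar astar k with hγdef
  have hγle : ∀ k, γ ≤ SINRul g δsq pstar astar k :=
    fun k => ciInf_le (Finite.bddBelow_range _) k
  -- Step 0 : γ > 0
  have hγpos : 0 < γ := by
    have hKne : (0:ℝ) < K := Nat.cast_pos.mpr hK
    set u : Fin K → ℝ := fun _ => Pb / K with hu
    have hupos : ∀ k, 0 < u k := fun _ => div_pos hPbpos hKne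
    have husum : ∑ k, u k ≤ Pb := by
      simp only [hu, Finset.sum_const, Finset.card_univ, Fintype.card_fin, nsmul_eq_mul]
      rw [mul_div_cancel₀ _ hKne.ne']
    have hSpos : ∀ k, 0 < SINRul g δsq u (fun _ => ⟨0, hN⟩) k := by
      intro k
      apply div_pos (mul_pos (hg _ _) (hupos k))
      have : 0 ≤ ∑ j ∈ Finset.univ.erase k, g ⟨0,hN⟩ j * u j :=
        Finset.sum_nonneg fun j _ => mul_nonneg (hg _ _).le (hupos j).le
      linarith [hδ ⟨0, hN⟩]
    obtain ⟨k0, hk0, -⟩ := fin_inf_attained hK (fun k => SINRul g δsq u (fun _ => ⟨0, hN⟩) k)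
    calc (0:ℝ) < SINRul g δsq u (fun _ => ⟨0, hN⟩) k0 := hSpos k0
    _ = ⨅ k, SINRul g δsq u (fun _ => ⟨0, hN⟩) k := hk0.symm
    _ ≤ γ := hopt u _ (fun k => (hupos k).le) husum
  -- positivity of pstar
  have hppos : ∀ k, 0 < pstar k := by
    intro k
    have h1 := (hγle k).trans_lt' hγpos
    by_contra hle
    push_neg at hle
    have hD : 0 < δsq (astar k) + ∑ j ∈ Finset.univ.erase k, g (astar k) j * pstar j := by
      have : 0 ≤ ∑ j ∈ Finset.univ.erase k, g (astar k) j * pstar j :=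
        Finset.sum_nonneg fun j _ => mul_nonneg (hg _ _).le (hp0 j)
      linarith [hδ (astar k)]
    have : SINRul g δsq pstar astar k ≤ 0 := by
      unfold SINRul
      exact div_nonpos_of_nonpos_of_nonneg (mul_nonpos_of_nonneg_of_nonpos (hg _ _).le hle) hD.le
    linarith
  -- Step 2 : sum tight
  have hsumeq : ∑ k, pstar k = Pb := by
    by_contra hne
    have hlt : ∑ k, pstar k < Pb := lt_of_le_of_ne hpsum hne
    have hSpos : 0 < ∑ k, pstar k := Finset.sum_pos (fun k _ => hppos k) Finset.univ_nonempty
    set t := Pb / ∑ k, pstar k with ht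
    have ht1 : 1 < t := (one_lt_div hSpos).mpr hlt
    have htpos : 0 < t := lt_trans one_pos ht1
    set p' : Fin K → ℝ := fun j => t * pstar j with hp'
    have hp'sum : ∑ k, p' k ≤ Pb := by
      simp only [hp']
      rw [← Finset.mul_sum, ht, div_mul_cancel₀ _ hSpos.ne']
    have hstrict : ∀ k, SINRul g δsq pstar astar k < SINRul g δsq p' astar k := by
      intro k
      unfold SINRul
      have hI : ∑ j ∈ Finset.univ.erase k, g (astar k) j * p' j
          = t * ∑ j ∈ Finset.univ.erase k, g (astar k) j * pstar j := by
        rw [Finset.mul_sum]; exact Finset.sum_congr rfl fun j _ => by simp [hp']; ring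
      rw [hI]
      set I := ∑ j ∈ Finset.univ.erase k, g (astar k) j * pstar j with hI2
      have hInn : 0 ≤ I := Finset.sum_nonneg fun j _ => mul_nonneg (hg _ _).le (hp0 j)
      have hd1 : 0 < δsq (astar k) + I := by linarith [hδ (astar k)]
      have hd2 : 0 < δsq (astar k) + t * I := by nlinarith [hδ (astar k)]
      rw [div_lt_div_iff₀ hd1 hd2]
      have hgk := hg (astar k) k
      have hpk := hppos k
      have hδk := hδ (astar k)
      simp only [hp']
      nlinarith [mul_pos (mul_pos hgk hpk) (mul_pos hδk (sub_pos.mpr ht1))]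
    obtain ⟨k1, hk1, -⟩ := fin_inf_attained hK (fun k => SINRul g δsq p' astar k)
    have : γ < ⨅ k, SINRul g δsq p' astar k := by
      rw [hk1]; exact (hγle k1).trans_lt (hstrict k1)
    exact absurd (hopt p' astar (fun k => (mul_nonneg htpos.le (hp0 k))) hp'sum) (not_le.mpr this)
  -- ratios
  set lam := ⨅ k, pstar k / Tk g δsq k pstar with hlamdef
  have hTpos : ∀ k, 0 < Tk g δsq k pstar := fun k => Tk_pos hN hg hδ k hp0
  have hlamle : ∀ k, lam ≤ pstar k / Tk g δsq k pstar :=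
    fun k => ciInf_le (Finite.bddBelow_range _) k
  have hγlam : γ ≤ lam := by
    apply le_ciInf
    intro k
    refine (hγle k).trans ?_
    rw [SINRul_eq]
    gcongr
    · exact hp0 k
    · exact hTpos k
    · exact Tk_le_Tkn _ _ _
  have hlampos : 0 < lam := lt_of_lt_of_le hγpos hγlam
  have hlamTle : ∀ k, lam * Tk g δsq k pstar ≤ pstar k := by
    intro k
    rw [← le_div_iff₀ (hTpos k)]
    exact hlamle k
  -- Step 3: all ratios equal lam
  have hall : ∀ k, pstar k = lam * Tk g δsq k pstar := by
    by_contra hne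
    push_neg at hne
    obtain ⟨kbad, hkbad⟩ := hne
    set Sc : Finset (Fin K) := Finset.univ.filter (fun k => pstar k ≠ lam * Tk g δsq k pstar) with hScdef
    have hScne : Sc.Nonempty := ⟨kbad, by simp [hScdef, hkbad]⟩
    have hScgt : ∀ k ∈ Sc, lam * Tk g δsq k pstar < pstar k := by
      intro k hk
      simp only [hScdef, Finset.mem_filter] at hk
      exact lt_of_le_of_ne (hlamTle k) (Ne.symm hk.2)
    -- choose epsilon
    obtain ⟨km, hkm, hkmle⟩ := fin_inf_attained hK pstar
    set m1 := pstar km with hm1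
    have hm1pos : 0 < m1 := hppos km
    set m2 := Sc.inf' hScne (fun k => pstar k - lam * Tk g δsq k pstar) with hm2
    have hm2pos : 0 < m2 := by
      rw [hm2, Finset.lt_inf'_iff]
      exact fun k hk => sub_pos.mpr (hScgt k hk)
    set ε := min (m1 / 2) (m2 / 2) with hε
    have hεpos : 0 < ε := lt_min (by linarith) (by linarith)
    have hεlt : ∀ j, ε < pstar j := by
      intro j
      have h1 : ε ≤ m1 / 2 := min_le_left _ _
      have h2 : m1 ≤ pstar j := hkmle j
      linarith
    have hεlt2 : ∀ k ∈ Sc, lam * Tk g δsq k pstar + ε < pstar k := by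
      intro k hk
      have h1 : ε ≤ m2 / 2 := min_le_right _ _
      have h2 : m2 ≤ pstar k - lam * Tk g δsq k pstar := Finset.inf'_le _ hk
      linarith
    set p' : Fin K → ℝ := fun j => if j ∈ Sc then pstar j - ε else pstar j with hp'
    have hp'le : ∀ j, p' j ≤ pstar j := by
      intro j; simp only [hp']; split <;> linarith
    have hp'nn : ∀ j, 0 ≤ p' j := by
      intro j; simp only [hp']; split
      · linarith [hεlt j]
      · exact hp0 j
    have hp'sum : ∑ k, p' k ≤ Pb := by
      rw [← hsumeq]
      exact Finset.sum_le_sum fun j _ => hp'le j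
    have hT'le : ∀ k, Tk g δsq k p' ≤ Tk g δsq k pstar :=
      fun k => Tk_mono hN hg k (fun j _ => hp'le j)
    have hT'pos : ∀ k, 0 < Tk g δsq k p' := fun k => Tk_pos hN hg hδ k hp'nn
    -- key : ∀ k, lam < p' k / Tk p'
    have hkey : ∀ k, lam < p' k / Tk g δsq k p' := by
      intro k
      by_cases hk : k ∈ Sc
      · have hp'k : p' k = pstar k - ε := by simp [hp', hk]
        rw [hp'k, lt_div_iff₀ (hT'pos k)]
        have := hεlt2 k hk
        have h3 : lam * Tk g δsq k p' ≤ lam * Tk g δsq k pstar :=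
          mul_le_mul_of_nonneg_left (hT'le k) hlampos.le
        linarith
      · have hp'k : p' k = pstar k := by simp [hp', hk]
        have hkeq : pstar k = lam * Tk g δsq k pstar := by
          by_contra h
          exact hk (by simp [hScdef, h])
        obtain ⟨j0, hj0S⟩ := hScne
        have hj0k : j0 ≠ k := fun h => hk (h ▸ hj0S)
        have hstrictT : Tk g δsq k p' < Tk g δsq k pstar := by
          apply Tk_strict hN hg k (fun j _ => hp'le j) j0 hj0k
          simp only [hp', if_pos hj0S]
          linarith
        rw [hp'k, lt_div_iff₀ (hT'pos k), hkeq]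
        exact mul_lt_mul_of_pos_left hstrictT hlampos
    -- best association for p'
    have ha' : ∀ k, ∃ n, Tk g δsq k p' = Tkn g δsq n k p' :=
      fun k => ⟨(Tk_attained (g := g) (δsq := δsq) hN k p').choose,
        (Tk_attained (g := g) (δsq := δsq) hN k p').choose_spec.1⟩
    choose a' ha'spec using ha'
    have hSINR' : ∀ k, SINRul g δsq p' a' k = p' k / Tk g δsq k p' := by
      intro k; rw [SINRul_eq, ← ha'spec k]
    obtain ⟨k1, hk1, -⟩ := fin_inf_attained hK (fun k => SINRul g δsq p' a' k)
    have hcontr : lam < ⨅ k, SINRul g δsq p' a' k := by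
      rw [hk1, hSINR' k1]; exact hkey k1
    have := (hopt p' a' hp'nn hp'sum).trans hγlam
    linarith
  -- conclude
  intro k
  have hTsum : ∑ j, Tk g δsq j pstar = ∑ j, Tk g δsq j pstar := rfl
  have hTsumpos : 0 < ∑ j, Tk g δsq j pstar :=
    Finset.sum_pos (fun j _ => hTpos j) Finset.univ_nonempty
  have hsum2 : lam * ∑ j, Tk g δsq j pstar = Pb := by
    rw [Finset.mul_sum, ← hsumeq]
    exact (Finset.sum_congr rfl fun j _ => (hall j).symm)
  have hlameq : lam = Pb / ∑ j, Tk g δsq j pstar := by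
    field_simp [hTsumpos.ne'] at hsum2 ⊢
    linarith [hsum2]
  rw [hall k, hlameq, div_mul_eq_mul_div]
end

section
/- Suppose g_{n,k} > 0 and δ_n² > 0 for all n, k. If (p*, a*) attains the optimum γ* of the uplink sum-power problem (P_sum^UL), then the SINRs of all users are equalized at optimality: SINR^UL_k(p*, a*) = γ* for every user k = 1,…,K. -/
open Finset

/-- At any optimal solution of the uplink sum-power problem (P_sum^UL) the SINRs of
all users are equalized: `SINR^UL_k(p*, a*) = γ*` for every user `k`, where `γ*` is
the optimal value (attained as the minimum SINR at `(p*, a*)`). -/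
theorem optimal_SINRs_are_equalized (N K : ℕ) (hN : 0 < N) (hK : 0 < K)
    (g : Fin N → Fin K → ℝ) (hg : ∀ n k, 0 < g n k)
    (δsq : Fin N → ℝ) (hδ : ∀ n, 0 < δsq n)
    (pbar : Fin N → ℝ) (hpbar : ∀ n, 0 < pbar n)
    (pstar : Fin K → ℝ) (astar : Fin K → Fin N) (γstar : ℝ)
    (hfeas : (∀ k, 0 ≤ pstar k) ∧ ∑ k, pstar k ≤ ∑ n, pbar n)
    (hopt : ∀ (p : Fin K → ℝ) (a : Fin K → Fin N),
      (∀ k, 0 ≤ p k) → (∑ k, p k ≤ ∑ n, pbar n) →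
      (⨅ k, SINRul g δsq p a k) ≤ ⨅ k, SINRul g δsq pstar astar k)
    (hval : γstar = ⨅ k, SINRul g δsq pstar astar k) :
    ∀ k, SINRul g δsq pstar astar k = γstar := by
  obtain ⟨hpnn, hpsum⟩ := hfeas
  haveI : Nonempty (Fin K) := ⟨⟨0, hK⟩⟩
  haveI : Nonempty (Fin N) := ⟨⟨0, hN⟩⟩
  intro k
  -- positivity of denominators
  have hDpos : ∀ (p : Fin K → ℝ), (∀ j, 0 ≤ p j) → ∀ (j : Fin K),
      0 < δsq (astar j) + ∑ i ∈ Finset.univ.erase j, g (astar j) i * p i := by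
    intro p hp j
    have h1 : 0 ≤ ∑ i ∈ Finset.univ.erase j, g (astar j) i * p i :=
      Finset.sum_nonneg fun i _ => mul_nonneg (hg _ _).le (hp i)
    linarith [hδ (astar j)]
  have hbdd : BddBelow (Set.range (SINRul g δsq pstar astar)) :=
    Set.Finite.bddBelow (Set.finite_range _)
  have hle : ∀ j, γstar ≤ SINRul g δsq pstar astar j := by
    intro j; rw [hval]; exact ciInf_le hbdd j
  by_contra hne
  have hlt : γstar < SINRul g δsq pstar astar k := lt_of_le_of_ne (hle k) (Ne.symm hne)
  -- general contradiction: a feasible power vector with all SINRs strictly above γstar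
  have key : ∀ (p : Fin K → ℝ), (∀ j, 0 ≤ p j) → (∑ j, p j ≤ ∑ n, pbar n) →
      (∀ j, γstar < SINRul g δsq p astar j) → False := by
    intro p hp hsum hstrict
    obtain ⟨k0, -, hk0⟩ := Finset.exists_min_image Finset.univ (SINRul g δsq p astar)
      ⟨k, Finset.mem_univ k⟩
    have h1 : γstar < ⨅ j, SINRul g δsq p astar j :=
      lt_of_lt_of_le (hstrict k0) (le_ciInf fun j => hk0 j (Finset.mem_univ j))
    have h2 := hopt p astar hp hsum
    rw [← hval] at h2
    exact absurd (lt_of_lt_of_le h1 h2) (lt_irrefl _)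
  rcases le_or_gt γstar 0 with hγ | hγ
  · -- use uniform positive powers
    have hS : 0 < ∑ n, pbar n :=
      Finset.sum_pos (fun n _ => hpbar n) Finset.univ_nonempty
    set c : ℝ := (∑ n, pbar n) / (K + 1) with hc
    have hcpos : 0 < c := div_pos hS (by positivity)
    refine key (fun _ => c) (fun _ => hcpos.le) ?_ ?_
    · have : ∑ _j : Fin K, c = (K : ℝ) * c := by
        simp [Finset.sum_const, Finset.card_univ, nsmul_eq_mul]
      rw [this]
      have h1 : (K : ℝ) * c ≤ ((K : ℝ) + 1) * c := by nlinarith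
      have h2 : ((K : ℝ) + 1) * c = ∑ n, pbar n := by
        rw [hc, mul_div_cancel₀]; positivity
      linarith
    · intro j
      have hnum : 0 < g (astar j) j * c := mul_pos (hg _ _) hcpos
      have hden := hDpos (fun _ => c) (fun _ => hcpos.le) j
      exact lt_of_le_of_lt hγ (div_pos hnum hden)
  · -- all powers are strictly positive
    have hppos : ∀ j, 0 < pstar j := by
      intro j
      rcases (hpnn j).lt_or_eq with h | h
      · exact h
      · exfalso
        have : SINRul g δsq pstar astar j = 0 := by
          simp [SINRul, ← h]
        linarith [hle j, hγ]
    set D : ℝ := δsq (astar k) + ∑ i ∈ Finset.univ.erase k, g (astar k) i * pstar i with hD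
    have hDk : 0 < D := hDpos pstar hpnn k
    set s : ℝ := SINRul g δsq pstar astar k with hs
    set ε : ℝ := min (pstar k / 2) ((s - γstar) * D / (2 * g (astar k) k)) with hε
    have hεpos : 0 < ε := by
      apply lt_min
      · linarith [hppos k]
      · apply div_pos (mul_pos (by linarith) hDk) (mul_pos two_pos (hg (astar k) k))
    have hεle1 : ε ≤ pstar k / 2 := min_le_left _ _
    have hεle2 : ε ≤ (s - γstar) * D / (2 * g (astar k) k) := min_le_right _ _
    set p' : Fin K → ℝ := Function.update pstar k (pstar k - ε) with hp'
    have hp'nn : ∀ j, 0 ≤ p' j := by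
      intro j
      by_cases hj : j = k
      · subst hj; simp [hp', Function.update_self]; linarith [hppos j]
      · simp [hp', Function.update_of_ne hj]; exact hpnn j
    have hp'sum : ∑ j, p' j ≤ ∑ n, pbar n := by
      have h1 : ∑ j, p' j = (pstar k - ε) + ∑ j ∈ Finset.univ.erase k, pstar j := by
        rw [hp', Finset.sum_update_of_mem (Finset.mem_univ k),
          Finset.sdiff_singleton_eq_erase]
      have h2 : ∑ j, pstar j = pstar k + ∑ j ∈ Finset.univ.erase k, pstar j :=
        (Finset.add_sum_erase _ _ (Finset.mem_univ k)).symm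
      linarith
    refine key p' hp'nn hp'sum ?_
    intro j
    by_cases hj : j = k
    · -- user k : SINR decreases but stays above γstar
      subst hj
      have hden : ∑ i ∈ Finset.univ.erase j, g (astar j) i * p' i
          = ∑ i ∈ Finset.univ.erase j, g (astar j) i * pstar i :=
        Finset.sum_congr rfl fun i hi => by
          rw [hp', Function.update_of_ne (Finset.ne_of_mem_erase hi)]
      have hval' : SINRul g δsq p' astar j
          = s - g (astar j) j * ε / D := by
        rw [SINRul, hden, hp', Function.update_self, hs, SINRul, ← hD, mul_sub, sub_div]
      rw [hval']
      have hgk := hg (astar j) j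
      have hεD : g (astar j) j * ε / D ≤ (s - γstar) / 2 := by
        have h2g : 0 < 2 * g (astar j) j := mul_pos two_pos (hg _ _)
        have h3 := hεle2
        rw [le_div_iff₀ h2g] at h3
        rw [div_le_div_iff₀ hDk (by norm_num : (0:ℝ) < 2)]
        nlinarith
      linarith
    · -- other users: interference strictly decreases
      have hnum : 0 < g (astar j) j * p' j := by
        rw [hp', Function.update_of_ne hj]
        exact mul_pos (hg _ _) (hppos j)
      have hkmem : k ∈ Finset.univ.erase j := Finset.mem_erase.mpr ⟨Ne.symm hj, Finset.mem_univ k⟩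
      have hden : ∑ i ∈ Finset.univ.erase j, g (astar j) i * p' i
          = (∑ i ∈ Finset.univ.erase j, g (astar j) i * pstar i) - g (astar j) k * ε := by
        rw [← Finset.sum_erase_add _ _ hkmem, ← Finset.sum_erase_add _ (fun i => g (astar j) i * pstar i) hkmem]
        have h1 : ∑ i ∈ (Finset.univ.erase j).erase k, g (astar j) i * p' i
            = ∑ i ∈ (Finset.univ.erase j).erase k, g (astar j) i * pstar i :=
          Finset.sum_congr rfl fun i hi => by
            rw [hp', Function.update_of_ne (Finset.ne_of_mem_erase hi)]
        rw [h1, hp', Function.update_self]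
        ring
      have hD'pos := hDpos p' hp'nn j
      have hDjpos := hDpos pstar hpnn j
      have hlt' : δsq (astar j) + ∑ i ∈ Finset.univ.erase j, g (astar j) i * p' i
          < δsq (astar j) + ∑ i ∈ Finset.univ.erase j, g (astar j) i * pstar i := by
        rw [hden]
        have : 0 < g (astar j) k * ε := mul_pos (hg _ _) hεpos
        linarith
      have hmono : SINRul g δsq pstar astar j < SINRul g δsq p' astar j := by
        rw [SINRul, SINRul]
        have hnum' : g (astar j) j * pstar j = g (astar j) j * p' j := by
          rw [hp', Function.update_of_ne hj]
        rw [hnum']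
        exact div_lt_div_of_pos_left hnum hD'pos hlt'
      exact lt_of_le_of_lt (hle j) hmono
end

section
/- Let K = N, with channel gains g_{i,j} > 0, user noise powers σ_k² > 0, and power budgets p̄_n > 0. Suppose a* is a permutation of {1,…,K} that is feasible for problem (P₁′), i.e. there exists a power vector p with 0 ≤ p_k ≤ p̄_{a*_k} and SINR_k(p, a*) ≥ 1 for every k. Then a* is the unique optimal solution of the assignment problem with gains {log g_{i,j}}: for every permutation a of {1,…,K} with a ≠ a*, Σ_{k=1}^K log g_{a*_k, k} > Σ_{k=1}^K log g_{a_k, k}. -/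
open Finset

/-- Key lemma: if the permutation `a*` is feasible for problem (P₁′) (some power
vector within the budgets achieves SINR ≥ 1 for every user), then `a*` is the unique
optimal solution of the assignment problem with gains `log g_{i,j}`. -/
theorem feasible_assoc_unique_assignment_maximizer (K : ℕ) (hK : 0 < K)
    (g : Fin K → Fin K → ℝ) (hg : ∀ i j, 0 < g i j)
    (σsq : Fin K → ℝ) (hσ : ∀ k, 0 < σsq k)
    (pbar : Fin K → ℝ) (hpbar : ∀ n, 0 < pbar n)
    (astar : Equiv.Perm (Fin K))
    (hfeas : ∃ p : Fin K → ℝ,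
      (∀ k, 0 ≤ p k) ∧ (∀ k, p k ≤ pbar (astar k)) ∧
      ∀ k, 1 ≤ SINRdl g σsq p (⇑astar) k) :
    ∀ a : Equiv.Perm (Fin K), a ≠ astar →
      ∑ k, Real.log (g (a k) k) < ∑ k, Real.log (g (astar k) k) := by
  intro a hne
  obtain ⟨p, hp0, hpb, hsinr⟩ := hfeas
  -- positivity of denominators
  have hDpos : ∀ k : Fin K, 0 < σsq k + ∑ j ∈ Finset.univ.erase k, p j * g (astar j) k := by
    intro k
    have : 0 ≤ ∑ j ∈ Finset.univ.erase k, p j * g (astar j) k :=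
      Finset.sum_nonneg fun j _ => mul_nonneg (hp0 j) (hg _ _).le
    linarith [hσ k]
  -- SINR ≥ 1 means numerator ≥ denominator
  have hkey : ∀ k : Fin K,
      σsq k + ∑ j ∈ Finset.univ.erase k, p j * g (astar j) k ≤ p k * g (astar k) k := by
    intro k
    have h := hsinr k
    unfold SINRdl at h
    have := (one_le_div (hDpos k)).mp h
    linarith
  -- each power is positive
  have hppos : ∀ k : Fin K, 0 < p k := by
    intro k
    have h := lt_of_lt_of_le (hDpos k) (hkey k)
    have := hg (astar k) k
    nlinarith
  -- strict dominance for j ≠ k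
  have hstrict : ∀ k j : Fin K, j ≠ k → p j * g (astar j) k < p k * g (astar k) k := by
    intro k j hjk
    have hmem : j ∈ Finset.univ.erase k := Finset.mem_erase.mpr ⟨hjk, Finset.mem_univ j⟩
    have hle : p j * g (astar j) k ≤ ∑ j ∈ Finset.univ.erase k, p j * g (astar j) k :=
      Finset.single_le_sum (fun i _ => mul_nonneg (hp0 i) (hg _ _).le) hmem
    have := hkey k
    linarith [hσ k]
  -- pointwise comparison of log terms
  have hpt : ∀ k : Fin K,
      Real.log (g (a k) k) + Real.log (p (astar.symm (a k))) ≤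
        Real.log (g (astar k) k) + Real.log (p k) := by
    intro k
    by_cases h : a k = astar k
    · rw [h]
      have : astar.symm (astar k) = k := astar.symm_apply_apply k
      rw [this]
    · set j := astar.symm (a k) with hj
      have hjk : j ≠ k := by
        intro hcontra
        apply h
        have := astar.apply_symm_apply (a k)
        rw [← hj, hcontra] at this
        exact this.symm
      have haj : astar j = a k := astar.apply_symm_apply (a k)
      have hlt := hstrict k j hjk
      rw [haj] at hlt
      have hlog := Real.log_lt_log (mul_pos (hppos j) (hg _ _)) hlt
      rw [Real.log_mul (hppos j).ne' (hg _ _).ne',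
        Real.log_mul (hppos k).ne' (hg _ _).ne'] at hlog
      linarith
  -- strictness at some k
  obtain ⟨k₀, hk₀⟩ : ∃ k, a k ≠ astar k := by
    by_contra hcon
    push_neg at hcon
    exact hne (Equiv.ext hcon)
  have hpt₀ : Real.log (g (a k₀) k₀) + Real.log (p (astar.symm (a k₀))) <
      Real.log (g (astar k₀) k₀) + Real.log (p k₀) := by
    set j := astar.symm (a k₀) with hj
    have hjk : j ≠ k₀ := by
      intro hcontra
      apply hk₀
      have := astar.apply_symm_apply (a k₀)
      rw [← hj, hcontra] at this
      exact this.symm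
    have haj : astar j = a k₀ := astar.apply_symm_apply (a k₀)
    have hlt := hstrict k₀ j hjk
    rw [haj] at hlt
    have hlog := Real.log_lt_log (mul_pos (hppos j) (hg _ _)) hlt
    rw [Real.log_mul (hppos j).ne' (hg _ _).ne',
      Real.log_mul (hppos k₀).ne' (hg _ _).ne'] at hlog
    linarith
  have hsumlt : ∑ k, (Real.log (g (a k) k) + Real.log (p (astar.symm (a k)))) <
      ∑ k, (Real.log (g (astar k) k) + Real.log (p k)) :=
    Finset.sum_lt_sum (fun k _ => hpt k) ⟨k₀, Finset.mem_univ k₀, hpt₀⟩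
  have hperm : ∑ k, Real.log (p (astar.symm (a k))) = ∑ k, Real.log (p k) :=
    Fintype.sum_equiv (a.trans astar.symm) _ _ (fun k => rfl)
  rw [Finset.sum_add_distrib, Finset.sum_add_distrib, hperm] at hsumlt
  linarith
end

section
/- Let K ≥ 1, let g_{i,j} > 0 for i, j ∈ {1,…,K}, and let p ∈ ℝ^K with p_k > 0 for all k. If p_k g_{k,k} > Σ_{j≠k} p_j g_{j,k} for every k, then for every permutation σ of {1,…,K} with σ ≠ identity, Π_{k=1}^K g_{k,k} > Π_{k=1}^K g_{σ(k),k}, and equivalently Σ_{k=1}^K log g_{k,k} > Σ_{k=1}^K log g_{σ(k),k}. -/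
open Finset

/-- If at every receiver `k` the desired signal power strictly dominates the total
interference under the identity matching, then the identity is the unique maximizer
of the assignment gains: for every nonidentity permutation `σ`,
`∏_k g_{k,k} > ∏_k g_{σ(k),k}` and `∑_k log g_{k,k} > ∑_k log g_{σ(k),k}`. -/
theorem diagonal_dominance_assignment (K : ℕ) (hK : 1 ≤ K)
    (g : Fin K → Fin K → ℝ) (hg : ∀ i j, 0 < g i j)
    (p : Fin K → ℝ) (hp : ∀ k, 0 < p k)
    (hdom : ∀ k, (∑ j ∈ Finset.univ.erase k, p j * g j k) < p k * g k k) :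
    ∀ σ : Equiv.Perm (Fin K), σ ≠ 1 →
      (∏ k, g (σ k) k < ∏ k, g k k) ∧
      (∑ k, Real.log (g (σ k) k) < ∑ k, Real.log (g k k)) := by
  intro σ hσ
  have key : ∏ k, g (σ k) k < ∏ k, g k k := by
    set S := σ.support with hS
    have hSne : S.Nonempty := by
      rw [Finset.nonempty_iff_ne_empty]
      intro h
      exact hσ (Equiv.Perm.support_eq_empty_iff.mp h)
    -- strict inequality on the support, with weights p
    have hstep : ∀ k ∈ S, p (σ k) * g (σ k) k < p k * g k k := by
      intro k hk
      have hne : σ k ≠ k := Equiv.Perm.mem_support.mp hk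
      have hmem : σ k ∈ Finset.univ.erase k := Finset.mem_erase.mpr ⟨hne, Finset.mem_univ _⟩
      have hle : p (σ k) * g (σ k) k ≤ ∑ j ∈ Finset.univ.erase k, p j * g j k :=
        Finset.single_le_sum (fun j _ => le_of_lt (mul_pos (hp j) (hg j k))) hmem
      exact lt_of_le_of_lt hle (hdom k)
    have hprod : ∏ k ∈ S, (p (σ k) * g (σ k) k) < ∏ k ∈ S, (p k * g k k) :=
      Finset.prod_lt_prod_of_nonempty
        (fun k _ => mul_pos (hp (σ k)) (hg (σ k) k)) hstep hSne
    have hpS : ∏ k ∈ S, p (σ k) = ∏ k ∈ S, p k :=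
      σ.prod_comp S p (fun a ha => Equiv.Perm.mem_support.mpr ha)
    rw [Finset.prod_mul_distrib, Finset.prod_mul_distrib, hpS] at hprod
    have hpSpos : 0 < ∏ k ∈ S, p k := Finset.prod_pos (fun k _ => hp k)
    have hgS : ∏ k ∈ S, g (σ k) k < ∏ k ∈ S, g k k :=
      lt_of_mul_lt_mul_left hprod (le_of_lt hpSpos)
    have hsplit1 : ∏ k, g (σ k) k = (∏ k ∈ S, g (σ k) k) * ∏ k ∈ Sᶜ, g (σ k) k :=
      (Finset.prod_mul_prod_compl S _).symm
    have hsplit2 : ∏ k, g k k = (∏ k ∈ S, g k k) * ∏ k ∈ Sᶜ, g k k :=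
      (Finset.prod_mul_prod_compl S _).symm
    have hcompl : ∏ k ∈ Sᶜ, g (σ k) k = ∏ k ∈ Sᶜ, g k k := by
      apply Finset.prod_congr rfl
      intro k hk
      have : σ k = k :=
        Equiv.Perm.notMem_support.mp (Finset.mem_compl.mp hk)
      rw [this]
    rw [hsplit1, hsplit2, hcompl]
    have hcpos : 0 < ∏ k ∈ Sᶜ, g k k := Finset.prod_pos (fun k _ => hg k k)
    exact mul_lt_mul_of_pos_right hgS hcpos
  refine ⟨key, ?_⟩
  have h1 : ∑ k, Real.log (g (σ k) k) = Real.log (∏ k, g (σ k) k) :=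
    (Real.log_prod (fun k _ => (hg (σ k) k).ne')).symm
  have h2 : ∑ k, Real.log (g k k) = Real.log (∏ k, g k k) :=
    (Real.log_prod (fun k _ => (hg k k).ne')).symm
  rw [h1, h2]
  exact Real.log_lt_log (Finset.prod_pos fun k _ => hg (σ k) k) key
end

section
/- Consider a downlink network with K users and N BSs, channel gains g_{n,k} > 0 and user noise powers σ_k² > 0, and let m be a positive integer. If a BS association a and a power vector p ≥ 0 satisfy SINR_k(p, a) ≥ 1/m for every user k = 1,…,K, then every BS serves at most m users: |{k : a_k = n}| ≤ m for every n = 1,…,N. -/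
open Finset

/-- If every user's SINR is at least `1/m`, then every BS serves at most `m` users. -/
theorem minSINR_bounds_load (N K : ℕ) (m : ℕ) (hm : 0 < m)
    (g : Fin N → Fin K → ℝ) (hg : ∀ n k, 0 < g n k)
    (σsq : Fin K → ℝ) (hσ : ∀ k, 0 < σsq k)
    (p : Fin K → ℝ) (hp : ∀ k, 0 ≤ p k) (a : Fin K → Fin N)
    (hSINR : ∀ k, (1 : ℝ) / m ≤ SINRdl g σsq p a k) :
    ∀ n : Fin N, (Finset.univ.filter (fun k => a k = n)).card ≤ m := by
  intro n
  set S := Finset.univ.filter (fun k => a k = n) with hSdef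
  rcases S.eq_empty_or_nonempty with hS | hSne
  · simp [hS]
  have hm' : (0 : ℝ) < m := by exact_mod_cast hm
  -- key facts for each k ∈ S
  have key : ∀ k ∈ S, (∑ j ∈ S.erase k, p j) < m * p k ∧ 0 < p k := by
    intro k hk
    have hak : a k = n := by simpa [hSdef] using hk
    have hden_nonneg : (0:ℝ) ≤ ∑ j ∈ Finset.univ.erase k, p j * g (a j) k :=
      Finset.sum_nonneg fun j _ => mul_nonneg (hp j) (hg _ _).le
    have hD : 0 < σsq k + ∑ j ∈ Finset.univ.erase k, p j * g (a j) k := by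
      linarith [hσ k]
    have h1 := hSINR k
    rw [SINRdl, div_le_div_iff₀ hm' hD] at h1
    -- h1 : 1 * (σsq k + ∑ ...) ≤ p k * g (a k) k * m
    have hsub : (∑ j ∈ S.erase k, p j * g (a j) k)
        ≤ ∑ j ∈ Finset.univ.erase k, p j * g (a j) k := by
      apply Finset.sum_le_sum_of_subset_of_nonneg
      · exact Finset.erase_subset_erase _ (Finset.subset_univ S)
      · intro j _ _; exact mul_nonneg (hp j) (hg _ _).le
    have hEq : (∑ j ∈ S.erase k, p j * g (a j) k) = (∑ j ∈ S.erase k, p j) * g n k := by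
      rw [Finset.sum_mul]
      refine Finset.sum_congr rfl fun j hj => ?_
      have : a j = n := by
        have := Finset.mem_of_mem_erase hj
        simpa [hSdef] using this
      rw [this]
    have hgk : 0 < g n k := hg n k
    have hσk := hσ k
    have h2 : (∑ j ∈ S.erase k, p j) * g n k < m * (p k * g n k) := by
      rw [← hEq]
      calc (∑ j ∈ S.erase k, p j * g (a j) k)
          < σsq k + ∑ j ∈ Finset.univ.erase k, p j * g (a j) k := by linarith
        _ ≤ p k * g (a k) k * m := by linarith
        _ = m * (p k * g n k) := by rw [hak]; ring
    constructor
    · exact lt_of_mul_lt_mul_right (by linarith) hgk.le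
    · have hsn : (0:ℝ) ≤ ∑ j ∈ S.erase k, p j :=
        Finset.sum_nonneg fun j _ => hp j
      nlinarith [mul_nonneg hsn hgk.le, mul_pos hm' hgk]
  set T := ∑ k ∈ S, p k with hT
  have hTpos : 0 < T := Finset.sum_pos (fun k hk => (key k hk).2) hSne
  have hsum : ∑ k ∈ S, (T - p k) < ∑ k ∈ S, (m : ℝ) * p k := by
    refine Finset.sum_lt_sum_of_nonempty hSne fun k hk => ?_
    have := (key k hk).1
    have := Finset.sum_erase_eq_sub (f := p) hk
    linarith
  rw [Finset.sum_sub_distrib, Finset.sum_const, ← Finset.mul_sum, nsmul_eq_mul] at hsum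
  have hcard : (S.card : ℝ) < m + 1 := by nlinarith
  have : S.card < m + 1 := by exact_mod_cast hcard
  omega
end

section
/- Consider a downlink network with an equal number of BSs and users, K = N, channel gains g_{n,k} > 0 and user noise powers σ_k² > 0. If a BS association a and a power vector p ≥ 0 satisfy SINR_k(p, a) ≥ 1 for every user k, then a is a permutation (bijection) of {1,…,K}; consequently the QoS-constrained problems (P′) (arbitrary associations) and (P₁′) (one-to-one matchings) have the same feasible associations and the same optimal value. -/
open Finset

/-- Feasibility for the QoS constrained problem (P′): powers within the budgets of
the serving BSs and SINR at least 1 for every user. -/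
noncomputable def FeasQoS {K : ℕ} (g : Fin K → Fin K → ℝ) (σsq : Fin K → ℝ)
    (pbar : Fin K → ℝ) (p : Fin K → ℝ) (a : Fin K → Fin K) : Prop :=
  (∀ k, 0 ≤ p k) ∧ (∀ k, p k ≤ pbar (a k)) ∧ (∀ k, 1 ≤ SINRdl g σsq p a k)

lemma QoS_key {K : ℕ} (g : Fin K → Fin K → ℝ) (hg : ∀ n k, 0 < g n k)
    (σsq : Fin K → ℝ) (hσ : ∀ k, 0 < σsq k)
    (p : Fin K → ℝ) (a : Fin K → Fin K)
    (hp : ∀ k, 0 ≤ p k) (hs : ∀ k, 1 ≤ SINRdl g σsq p a k) :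
    ∀ j k : Fin K, j ≠ k → a j = a k → p j < p k := by
  intro j k hjk ha
  have hden : 0 < σsq k + ∑ i ∈ Finset.univ.erase k, p i * g (a i) k := by
    have : 0 ≤ ∑ i ∈ Finset.univ.erase k, p i * g (a i) k :=
      Finset.sum_nonneg fun i _ => mul_nonneg (hp i) (hg (a i) k).le
    linarith [hσ k]
  have h1 := hs k
  rw [SINRdl, le_div_iff₀ hden, one_mul] at h1
  have hmem : j ∈ Finset.univ.erase k := Finset.mem_erase.mpr ⟨hjk, Finset.mem_univ j⟩
  have hsing : p j * g (a j) k ≤ ∑ i ∈ Finset.univ.erase k, p i * g (a i) k :=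
    Finset.single_le_sum (fun i _ => mul_nonneg (hp i) (hg (a i) k).le) hmem
  have : p j * g (a k) k < p k * g (a k) k := by
    rw [ha] at hsing; linarith [hσ k]
  exact lt_of_mul_lt_mul_right this (hg (a k) k).le

/-- With `K = N`, the QoS constraints SINR ≥ 1 force any feasible association to be a
permutation; consequently problems (P′) and (P₁′) have the same feasible associations
and the same optimal value. -/
theorem QoS_assoc_is_permutation (K : ℕ) (hK : 0 < K)
    (g : Fin K → Fin K → ℝ) (hg : ∀ n k, 0 < g n k)
    (σsq : Fin K → ℝ) (hσ : ∀ k, 0 < σsq k)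
    (pbar : Fin K → ℝ) (hpbar : ∀ n, 0 < pbar n) :
    (∀ (p : Fin K → ℝ) (a : Fin K → Fin K),
      (∀ k, 0 ≤ p k) → (∀ k, 1 ≤ SINRdl g σsq p a k) → Function.Bijective a) ∧
    {a : Fin K → Fin K | ∃ p, FeasQoS g σsq pbar p a}
      = {a : Fin K → Fin K | (∃ σ : Equiv.Perm (Fin K), ⇑σ = a) ∧
          ∃ p, FeasQoS g σsq pbar p a} ∧
    sSup {γ | ∃ (p : Fin K → ℝ) (a : Fin K → Fin K),
        FeasQoS g σsq pbar p a ∧ γ = ⨅ k, SINRdl g σsq p a k}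
      = sSup {γ | ∃ (p : Fin K → ℝ) (σ : Equiv.Perm (Fin K)),
        FeasQoS g σsq pbar p ⇑σ ∧ γ = ⨅ k, SINRdl g σsq p (⇑σ) k} := by
  have main : ∀ (p : Fin K → ℝ) (a : Fin K → Fin K),
      (∀ k, 0 ≤ p k) → (∀ k, 1 ≤ SINRdl g σsq p a k) → Function.Bijective a := by
    intro p a hp hs
    have hinj : Function.Injective a := by
      intro j k hjk
      by_contra hne
      exact absurd (QoS_key g hg σsq hσ p a hp hs j k hne hjk)
        (not_lt.mpr (QoS_key g hg σsq hσ p a hp hs k j (Ne.symm hne) hjk.symm).le)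
    exact Finite.injective_iff_bijective.mp hinj
  refine ⟨main, ?_, ?_⟩
  · ext a
    simp only [Set.mem_setOf_eq]
    constructor
    · rintro ⟨p, hf⟩
      exact ⟨⟨Equiv.ofBijective a (main p a hf.1 hf.2.2), rfl⟩, p, hf⟩
    · rintro ⟨-, hp⟩; exact hp
  · congr 1
    ext γ
    simp only [Set.mem_setOf_eq]
    constructor
    · rintro ⟨p, a, hf, hγ⟩
      exact ⟨p, Equiv.ofBijective a (main p a hf.1 hf.2.2), hf, hγ⟩
    · rintro ⟨p, σ, hf, hγ⟩
      exact ⟨p, ⇑σ, hf, hγ⟩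
end

section
/- Consider a downlink network with K = N, channel gains g_{n,k} > 0, user noise powers σ_k² > 0, and per-BS power budgets p̄_n > 0. Suppose (p*, a*) attains the optimal value γ* of problem (P), and γ* ≥ 1. Then a* is a permutation of {1,…,K} and it is the unique maximizer of Σ_{k=1}^K log g_{a_k, k} over all permutations a of {1,…,K}. -/
open Finset

/-- With `K = N`, if `(p*, a*)` attains the optimal value `γ* ≥ 1` of the per-BS power
constrained problem (P), then `a*` is a permutation and it is the unique maximizer of
`∑_k log g_{a_k,k}` over all permutations. -/
theorem optimal_assoc_is_unique_assignment_maximizer (K : ℕ) (hK : 0 < K)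
    (g : Fin K → Fin K → ℝ) (hg : ∀ n k, 0 < g n k)
    (σsq : Fin K → ℝ) (hσ : ∀ k, 0 < σsq k)
    (pbar : Fin K → ℝ) (hpbar : ∀ n, 0 < pbar n)
    (pstar : Fin K → ℝ) (astar : Fin K → Fin K) (γstar : ℝ)
    (hfeas : (∀ k, 0 ≤ pstar k) ∧
      ∀ n, ∑ k ∈ Finset.univ.filter (fun k => astar k = n), pstar k ≤ pbar n)
    (hopt : ∀ (p : Fin K → ℝ) (a : Fin K → Fin K),
      (∀ k, 0 ≤ p k) →
      (∀ n, ∑ k ∈ Finset.univ.filter (fun k => a k = n), p k ≤ pbar n) →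
      (⨅ k, SINRdl g σsq p a k) ≤ ⨅ k, SINRdl g σsq pstar astar k)
    (hval : γstar = ⨅ k, SINRdl g σsq pstar astar k)
    (hγ : 1 ≤ γstar) :
    ∃ σ : Equiv.Perm (Fin K), ⇑σ = astar ∧
      ∀ τ : Equiv.Perm (Fin K), τ ≠ σ →
        ∑ k, Real.log (g (τ k) k) < ∑ k, Real.log (g (σ k) k) := by
  haveI : Nonempty (Fin K) := ⟨⟨0, hK⟩⟩
  obtain ⟨hp0, hbud⟩ := hfeas
  -- each SINR is at least 1
  have hge : ∀ k, 1 ≤ SINRdl g σsq pstar astar k := by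
    intro k
    refine le_trans hγ ?_
    rw [hval]
    exact ciInf_le (Finite.bddBelow_range _) k
  have hden : ∀ k : Fin K,
      0 < σsq k + ∑ j ∈ Finset.univ.erase k, pstar j * g (astar j) k := by
    intro k
    have : 0 ≤ ∑ j ∈ Finset.univ.erase k, pstar j * g (astar j) k :=
      Finset.sum_nonneg fun j _ => mul_nonneg (hp0 j) (hg _ _).le
    linarith [hσ k]
  have hnum : ∀ k, σsq k + ∑ j ∈ Finset.univ.erase k, pstar j * g (astar j) k
      ≤ pstar k * g (astar k) k := by
    intro k
    have h1 := hge k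
    unfold SINRdl at h1
    exact (one_le_div (hden k)).mp h1
  have hkey : ∀ k j : Fin K, j ≠ k →
      pstar j * g (astar j) k < pstar k * g (astar k) k := by
    intro k j hj
    have hmem : j ∈ Finset.univ.erase k := Finset.mem_erase.mpr ⟨hj, Finset.mem_univ j⟩
    have hle : pstar j * g (astar j) k
        ≤ ∑ j' ∈ Finset.univ.erase k, pstar j' * g (astar j') k :=
      Finset.single_le_sum (fun i _ => mul_nonneg (hp0 i) (hg _ _).le) hmem
    have := hnum k
    linarith [hσ k]
  have hppos : ∀ k, 0 < pstar k := by
    intro k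
    have h := lt_of_lt_of_le (hden k) (hnum k)
    nlinarith [hg (astar k) k, hp0 k]
  -- astar is injective
  have hinj : Function.Injective astar := by
    intro k j h
    by_contra hne
    have h1 := hkey k j (Ne.symm hne ∘ id ∘ fun e => e)
    have h2 := hkey j k hne
    rw [h] at h1
    rw [← h] at h2
    have hg1 := hg (astar j) k
    have hg2 := hg (astar k) j
    nlinarith [mul_pos hg1 hg2]
  let σp : Equiv.Perm (Fin K) := Equiv.ofBijective astar (Finite.injective_iff_bijective.mp hinj)
  have hσp : ⇑σp = astar := rfl
  refine ⟨σp, hσp, ?_⟩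
  intro τ hτ
  set π : Equiv.Perm (Fin K) := τ.trans σp.symm with hπ
  have hπk : ∀ k, astar (π k) = τ k := by
    intro k
    have : σp (π k) = τ k := by simp [hπ]
    simpa [hσp] using this
  have hfix : ∀ k, π k = k ↔ τ k = astar k := by
    intro k
    constructor
    · intro h
      have := hπk k
      rw [h] at this
      exact this.symm
    · intro h
      have : σp.symm (τ k) = k := by
        rw [h, ← hσp]
        exact σp.symm_apply_apply k
      simpa [hπ] using this
  -- pointwise inequality
  have hAB : ∀ k : Fin K,
      Real.log (pstar (π k)) + Real.log (g (τ k) k)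
        ≤ Real.log (pstar k) + Real.log (g (astar k) k) := by
    intro k
    by_cases h : τ k = astar k
    · rw [(hfix k).mpr h, h]
    · have hne : π k ≠ k := fun e => h ((hfix k).mp e)
      have hk := hkey k (π k) hne
      rw [hπk k] at hk
      have l1 : Real.log (pstar (π k) * g (τ k) k) < Real.log (pstar k * g (astar k) k) :=
        Real.log_lt_log (mul_pos (hppos _) (hg _ _)) hk
      rw [Real.log_mul (hppos _).ne' (hg _ _).ne',
        Real.log_mul (hppos _).ne' (hg _ _).ne'] at l1
      exact l1.le
  have hEx : ∃ k : Fin K, Real.log (pstar (π k)) + Real.log (g (τ k) k)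
      < Real.log (pstar k) + Real.log (g (astar k) k) := by
    have : ∃ k, τ k ≠ astar k := by
      by_contra hc
      push_neg at hc
      exact hτ (Equiv.ext fun k => by rw [hc k, hσp])
    obtain ⟨k, h⟩ := this
    refine ⟨k, ?_⟩
    have hne : π k ≠ k := fun e => h ((hfix k).mp e)
    have hk := hkey k (π k) hne
    rw [hπk k] at hk
    have l1 : Real.log (pstar (π k) * g (τ k) k) < Real.log (pstar k * g (astar k) k) :=
      Real.log_lt_log (mul_pos (hppos _) (hg _ _)) hk
    rw [Real.log_mul (hppos _).ne' (hg _ _).ne',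
      Real.log_mul (hppos _).ne' (hg _ _).ne'] at l1
    exact l1
  have hsum : ∑ k, (Real.log (pstar (π k)) + Real.log (g (τ k) k))
      < ∑ k, (Real.log (pstar k) + Real.log (g (astar k) k)) := by
    obtain ⟨k0, hk0⟩ := hEx
    exact Finset.sum_lt_sum (fun k _ => hAB k) ⟨k0, Finset.mem_univ k0, hk0⟩
  have hperm : ∑ k, Real.log (pstar (π k)) = ∑ k, Real.log (pstar k) :=
    Equiv.sum_comp π (fun k => Real.log (pstar k))
  rw [Finset.sum_add_distrib, Finset.sum_add_distrib, hperm] at hsum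
  have : ∑ k, Real.log (g (τ k) k) < ∑ k, Real.log (g (astar k) k) := by linarith
  simpa [hσp] using this
end

section
/- Consider the two-variable max-min problem: maximize min{ 2p₁/(1 + 2p₂), p₂/(1 + p₁) } subject to 0 ≤ p₁ ≤ 1 and 0 ≤ p₂ ≤ 1. Its optimal value equals (√7 − 1)/3, and this value is attained at p₁ = (√7 − 1)/2, p₂ = 1. -/
/-- Configuration 1 of the two-user subnetwork: the optimal value of
`max min{2p₁/(1+2p₂), p₂/(1+p₁)}` over `p₁, p₂ ∈ [0,1]` is `(√7 − 1)/3`,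
attained at `p₁ = (√7 − 1)/2`, `p₂ = 1`. -/
theorem config1_max_min_value :
    IsGreatest
      {γ : ℝ | ∃ p₁ p₂ : ℝ, 0 ≤ p₁ ∧ p₁ ≤ 1 ∧ 0 ≤ p₂ ∧ p₂ ≤ 1 ∧
        γ = min (2 * p₁ / (1 + 2 * p₂)) (p₂ / (1 + p₁))}
      ((Real.sqrt 7 - 1) / 3) ∧
    min (2 * ((Real.sqrt 7 - 1) / 2) / (1 + 2 * 1))
        (1 / (1 + (Real.sqrt 7 - 1) / 2))
      = (Real.sqrt 7 - 1) / 3 := by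
  have hs : Real.sqrt 7 ^ 2 = 7 := Real.sq_sqrt (by norm_num)
  have hs2 : (2:ℝ) ≤ Real.sqrt 7 := by
    nlinarith [Real.sqrt_nonneg 7]
  have hs3 : Real.sqrt 7 ≤ 3 := by nlinarith [Real.sqrt_nonneg 7]
  set s := Real.sqrt 7 with hsdef
  have heq : min (2 * ((s - 1) / 2) / (1 + 2 * 1)) (1 / (1 + (s - 1) / 2))
      = (s - 1) / 3 := by
    have h1 : 2 * ((s-1)/2) / (1+2*1) = (s-1)/3 := by ring
    have h2 : 1 / (1 + (s-1)/2) = (s-1)/3 := by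
      rw [div_eq_div_iff (by nlinarith) (by norm_num)]
      nlinarith
    rw [h1, h2, min_self]
  refine ⟨⟨⟨(s-1)/2, 1, by nlinarith, by nlinarith, by norm_num, le_refl 1,
      heq.symm⟩, ?_⟩, heq⟩
  rintro γ ⟨p₁, p₂, h1, h2, h3, h4, rfl⟩
  by_contra h
  push_neg at h
  have hd1 : (0:ℝ) < 1 + 2*p₂ := by linarith
  have hd2 : (0:ℝ) < 1 + p₁ := by linarith
  have ha := lt_of_lt_of_le h (min_le_left _ _)
  have hb := lt_of_lt_of_le h (min_le_right _ _)
  have ha' : (s-1)/3 * (1+2*p₂) < 2*p₁ := (lt_div_iff₀ hd1).mp ha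
  have hb' : (s-1)/3 * (1+p₁) < p₂ := (lt_div_iff₀ hd2).mp hb
  -- from p₂ ≤ 1 and hb': p₁ < (s-1)/2
  have hp1 : p₁ < (s-1)/2 := by nlinarith
  nlinarith [mul_pos hd2 hd1, sq_nonneg (s-1), mul_nonneg h1 h3,
    mul_lt_mul_of_pos_left hb' (show (0:ℝ) < 2*(s-1)/3 by nlinarith)]
end
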